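/- Let p₀ be a strictly positive probability vector on [N], ℓ: [N] → ℝ, and ν > 0 with ν ≥ (1/2)E_{p₀}[ℓ]. Define p*^(j) = p₀^(j)·(1 + (ℓ(j) − E_{p₀}[ℓ])/(2ν)). Then E_{p*}[ℓ] − ν·χ²(p*, p₀) = E_{p₀}[ℓ] + Var_{p₀}(ℓ)/(4ν). -/
import Mathlib


open scoped BigOperators

/-- Variance-regularized closed form of the chi-squared DRO objective at its
maximizer: `E_{p*}[ℓ] − ν χ²(p*, p₀) = E_{p₀}[ℓ] + Var_{p₀}(ℓ)/(4ν)`. -/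
theorem stmt_12 {N : ℕ} (p0 : Fin N → ℝ) (ℓ : Fin N → ℝ) (ν : ℝ)
    (hp0pos : ∀ j, 0 < p0 j) (hp0sum : ∑ j, p0 j = 1)
    (hνpos : 0 < ν) (hν : ν ≥ (1 / 2) * ∑ j, p0 j * ℓ j)
    (pstar : Fin N → ℝ)
    (hpstar : pstar = fun j => p0 j * (1 + (ℓ j - ∑ i, p0 i * ℓ i) / (2 * ν))) :
    (∑ j, pstar j * ℓ j) - ν * ∑ j, (pstar j - p0 j) ^ 2 / p0 j =
      (∑ j, p0 j * ℓ j) +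
        ((∑ j, p0 j * (ℓ j) ^ 2) - (∑ j, p0 j * ℓ j) ^ 2) / (4 * ν) := by
  subst hpstar
  set S1 := ∑ j, p0 j * ℓ j with hS1
  set S2 := ∑ j, p0 j * (ℓ j) ^ 2 with hS2
  have hν' : ν ≠ 0 := ne_of_gt hνpos
  have h1 : ∑ j, (p0 j * (1 + (ℓ j - S1) / (2 * ν))) * ℓ j
      = S1 + (S2 - S1 ^ 2) / (2 * ν) := by
    have : ∀ j, (p0 j * (1 + (ℓ j - S1) / (2 * ν))) * ℓ j
        = p0 j * ℓ j + (p0 j * ℓ j ^ 2) / (2 * ν) - (p0 j * ℓ j) * (S1 / (2 * ν)) := by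
      intro j; field_simp; ring
    rw [Finset.sum_congr rfl (fun j _ => this j), Finset.sum_sub_distrib,
      Finset.sum_add_distrib, ← Finset.sum_div, ← Finset.sum_mul, ← hS1, ← hS2]
    field_simp; ring
  have h2 : ∑ j, ((p0 j * (1 + (ℓ j - S1) / (2 * ν))) - p0 j) ^ 2 / p0 j
      = (S2 - S1 ^ 2) / (4 * ν ^ 2) := by
    have : ∀ j, ((p0 j * (1 + (ℓ j - S1) / (2 * ν))) - p0 j) ^ 2 / p0 j
        = (p0 j * ℓ j ^ 2) / (4 * ν ^ 2) - (p0 j * ℓ j) * (2 * S1 / (4 * ν ^ 2))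
          + p0 j * (S1 ^ 2 / (4 * ν ^ 2)) := by
      intro j
      have hp : p0 j ≠ 0 := ne_of_gt (hp0pos j)
      field_simp
      ring
    rw [Finset.sum_congr rfl (fun j _ => this j), Finset.sum_add_distrib,
      Finset.sum_sub_distrib, ← Finset.sum_div, ← Finset.sum_mul, ← Finset.sum_mul,
      ← hS1, ← hS2, hp0sum]
    field_simp; ring
  rw [h1, h2]
  field_simp
  ring
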